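/- arXiv:2204.06912 — 2 statements merged into one kernel-verified Lean document; each statement's English description precedes it below -/
import Mathlib

section
/- Let X be a singular real n×n matrix, and let V_⊥ ∈ ℝ^{n×m} and V̄ ∈ ℝ^{n×p} (with p = n−m) be matrices whose columns form orthonormal bases of the nullspace of X and of the row space of X, respectively. Then the p×p matrix V̄ᵀ X V̄ is singular if and only if X is defective with zero as a defective eigenvalue (i.e., the geometric multiplicity of the eigenvalue 0 of X is strictly smaller than its algebraic multiplicity). -/
/-!
Let `P = V̄ V̄ᵀ` be the orthogonal projection onto the row space of `X`. Then `X = X P`, so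
`X` and `V̄ᵀ X V̄` are the two products `(X V̄) V̄ᵀ` and `V̄ᵀ (X V̄)`, whose characteristic
polynomials agree up to a power of `t`: `χ_X · t^p = χ_{V̄ᵀXV̄} · t^n`. Comparing
multiplicities of the root `0` and using rank–nullity, `dim ker X = n - p`, the algebraic
multiplicity of `0` for `X` exceeds its geometric one by exactly the multiplicity of `0` as a
root of `χ_{V̄ᵀXV̄}`, which is positive iff `V̄ᵀ X V̄` is singular.
-/

open Matrix Polynomial Module

lemma Polynomial.rootMultiplicity_zero_mul_X_pow {R : Type*} [CommRing R] {f : R[X]}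
    (hf : f ≠ 0) (k : ℕ) : rootMultiplicity 0 (f * X ^ k) = rootMultiplicity 0 f + k := by
  simpa using rootMultiplicity_mul_X_sub_C_pow (a := 0) (n := k) hf

namespace Matrix

variable {m n k R : Type*} [Fintype m] [Fintype n] [Fintype k] [DecidableEq k]

lemma det_eq_zero_iff_rootMultiplicity_charpoly_pos [DecidableEq n] [CommRing R] [Nontrivial R]
    (M : Matrix n n R) : M.det = 0 ↔ 0 < rootMultiplicity 0 M.charpoly := by
  rw [rootMultiplicity_pos M.charpoly_monic.ne_zero, IsRoot, ← coeff_zero_eq_eval_zero,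
    det_eq_sign_charpoly_coeff, (isUnit_neg_one.pow _).mul_right_eq_zero]

lemma mulVec_injective_of_transpose_mul_self_eq_one [CommSemiring R] {V : Matrix n k R}
    (hV : Vᵀ * V = 1) : Function.Injective V.mulVec := fun u w huw => by
  simpa [mulVec_mulVec, hV] using congrArg (Vᵀ *ᵥ ·) huw

lemma mul_mul_transpose_eq_self_of_range_transpose_le [CommSemiring R] {A : Matrix m n R}
    {V : Matrix n k R} (hV : Vᵀ * V = 1)
    (hA : LinearMap.range Aᵀ.mulVecLin ≤ LinearMap.range V.mulVecLin) : A * V * Vᵀ = A := by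
  rw [← transpose_inj, transpose_mul, transpose_mul, transpose_transpose, ext_iff_mulVec]
  intro w
  obtain ⟨u, hu⟩ := hA ⟨w, rfl⟩
  simp only [mulVecLin_apply] at hu
  rw [← mulVec_mulVec, ← mulVec_mulVec, ← hu, mulVec_mulVec u Vᵀ, hV, one_mulVec]

lemma charpoly_mul_X_pow_eq_of_mul_mul_transpose_eq [DecidableEq n] [CommRing R]
    {A : Matrix n n R} {V : Matrix n k R} (hA : A * V * Vᵀ = A) :
    A.charpoly * X ^ Fintype.card k = (Vᵀ * A * V).charpoly * X ^ Fintype.card n := by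
  conv_lhs => rw [← hA]
  simpa only [mul_comm, Matrix.mul_assoc] using charpoly_mul_comm' (A * V) Vᵀ

lemma card_add_finrank_ker_mulVecLin_eq_card [Field R] {A : Matrix m n R}
    {V : Matrix n k R} (hV : Vᵀ * V = 1)
    (hA : LinearMap.range V.mulVecLin = LinearMap.range Aᵀ.mulVecLin) :
    Fintype.card k + finrank R (LinearMap.ker A.mulVecLin) = Fintype.card n := by
  have hVrank : V.rank = Fintype.card k := by
    rw [rank, LinearMap.finrank_range_of_inj (mulVec_injective_of_transpose_mul_self_eq_one hV),
      finrank_fintype_fun_eq_card]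
  have hrank : A.rank = Fintype.card k := by
    rw [← rank_transpose, ← hVrank, rank, rank, hA]
  rw [← hrank, rank, LinearMap.finrank_range_add_finrank_ker, finrank_fintype_fun_eq_card]

end Matrix

theorem stmt0_general {n p : ℕ}
    (X : Matrix (Fin n) (Fin n) ℝ)
    (Vbar : Matrix (Fin n) (Fin p) ℝ)
    (horth2 : Vbarᵀ * Vbar = 1)
    (hrow : LinearMap.range Vbar.mulVecLin = LinearMap.range Xᵀ.mulVecLin) :
    (Vbarᵀ * X * Vbar).det = 0 ↔
      Module.finrank ℝ (LinearMap.ker X.mulVecLin) <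
        Polynomial.rootMultiplicity 0 X.charpoly := by
  have hproj := mul_mul_transpose_eq_self_of_range_transpose_le horth2 hrow.ge
  have hmult := congrArg (rootMultiplicity 0) (charpoly_mul_X_pow_eq_of_mul_mul_transpose_eq hproj)
  simp only [rootMultiplicity_zero_mul_X_pow (charpoly_monic _).ne_zero, Fintype.card_fin]
    at hmult
  have hnullity := card_add_finrank_ker_mulVecLin_eq_card horth2 hrow
  rw [Fintype.card_fin, Fintype.card_fin] at hnullity
  rw [det_eq_zero_iff_rootMultiplicity_charpoly_pos]
  omega

/-- Lemma 1: with `X` a singular real `n×n` matrix, `V⊥` having orthonormal columns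
spanning `ker X` and `V̄` having orthonormal columns spanning the orthogonal
complement of `ker X` (the row space of `X`), the matrix `V̄ᵀ X V̄` is singular
iff `X` is defective with `0` as a defective eigenvalue (geometric multiplicity
of the eigenvalue `0` strictly smaller than its algebraic multiplicity). -/
theorem stmt0 {n m p : ℕ} (hp : p = n - m) (hm : 0 < m)
    (X : Matrix (Fin n) (Fin n) ℝ)
    (hXsing : X.det = 0)
    (Vperp : Matrix (Fin n) (Fin m) ℝ) (Vbar : Matrix (Fin n) (Fin p) ℝ)
    (horth1 : Vbarᵀ * Vperp = 0)
    (horth2 : Vbarᵀ * Vbar = 1)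
    (horth3 : Vperpᵀ * Vperp = 1)
    (hker : LinearMap.range Vperp.mulVecLin = LinearMap.ker X.mulVecLin)
    (hrow : LinearMap.range Vbar.mulVecLin = LinearMap.range Xᵀ.mulVecLin) :
    (Vbarᵀ * X * Vbar).det = 0 ↔
      Module.finrank ℝ (LinearMap.ker X.mulVecLin) <
        Polynomial.rootMultiplicity 0 X.charpoly :=
  stmt0_general X Vbar horth2 hrow
end

section
/- Let A ∈ ℝ^{n×n} be singular with nullspace of dimension m, and V̄ ∈ ℝ^{n×p}, V_⊥ ∈ ℝ^{n×m} (p = n−m) with orthonormal columns spanning the row space and nullspace of A respectively. Assume zero is not a defective eigenvalue of A, so V̄ᵀAV̄ is invertible. Let P̄ ∈ ℝ^{p×p}, P_⊥ ∈ ℝ^{m×m} and define P_×ᵀ = −P_⊥ V_⊥ᵀ A V̄ (V̄ᵀAV̄)^{−1}, S̄ = P̄V̄ᵀ + P_× V_⊥ᵀ, S_⊥ = P_⊥V_⊥ᵀ + P_×ᵀV̄ᵀ. Then the cross term U := V̄ᵀAᵀS_⊥ᵀ + S̄ A V_⊥ vanishes: U = 0. -/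
open Matrix

/-!
`S⊥ A V̄ = P⊥ V⊥ᵀ A V̄ + Pₓᵀ (V̄ᵀ A V̄)` vanishes because `Pₓᵀ` is chosen to cancel the first
summand through `(V̄ᵀ A V̄)⁻¹`, and `S̄ A V⊥ = 0` since `A V⊥ = 0`. The cross term is the sum of
`(S⊥ A V̄)ᵀ` and `S̄ A V⊥`.
-/

theorem Matrix.add_mul_mul_eq_zero_of_eq_neg_mul_inv {R ι κ μ : Type*} [CommRing R]
    [Fintype ι] [Fintype κ] [DecidableEq κ] [Fintype μ]
    (A : Matrix ι ι R) (W : Matrix ι κ R) (V : Matrix ι μ R) (P : Matrix μ μ R)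
    {X : Matrix μ κ R} (hX : X = -(P * Vᵀ * A * W * (Wᵀ * A * W)⁻¹))
    (hK : IsUnit (Wᵀ * A * W)) :
    (P * Vᵀ + X * Wᵀ) * A * W = 0 := by
  have hcancel : X * (Wᵀ * A * W) = -(P * Vᵀ * A * W) := by
    rw [hX, Matrix.neg_mul, nonsing_inv_mul_cancel_right _ _ ((isUnit_iff_isUnit_det _).mp hK)]
  rw [Matrix.add_mul, Matrix.add_mul, Matrix.mul_assoc X, Matrix.mul_assoc X, hcancel,
    add_neg_cancel]

theorem stmt11_general {n p m : ℕ}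
    (A : Matrix (Fin n) (Fin n) ℝ)
    (Vbar : Matrix (Fin n) (Fin p) ℝ) (Vperp : Matrix (Fin n) (Fin m) ℝ)
    (hker : A * Vperp = 0)
    (hinv : IsUnit (Vbarᵀ * A * Vbar))
    (Pperp : Matrix (Fin m) (Fin m) ℝ)
    (Px : Matrix (Fin p) (Fin m) ℝ)
    (hPx : Pxᵀ = -(Pperp * Vperpᵀ * A * Vbar * (Vbarᵀ * A * Vbar)⁻¹))
    (Sbar : Matrix (Fin p) (Fin n) ℝ)
    (Sperp : Matrix (Fin m) (Fin n) ℝ)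
    (hSperp : Sperp = Pperp * Vperpᵀ + Pxᵀ * Vbarᵀ) :
    Vbarᵀ * Aᵀ * Sperpᵀ + Sbar * A * Vperp = 0 := by
  have hSperpAVbar : Sperp * A * Vbar = 0 :=
    hSperp ▸ add_mul_mul_eq_zero_of_eq_neg_mul_inv A Vbar Vperp Pperp hPx hinv
  have hcross : Vbarᵀ * Aᵀ * Sperpᵀ = (Sperp * A * Vbar)ᵀ := by
    rw [transpose_mul, transpose_mul, Matrix.mul_assoc]
  rw [hcross, hSperpAVbar, Matrix.mul_assoc, hker, Matrix.mul_zero, transpose_zero, add_zero]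

/-- With `A V⊥ = 0`, `V̄ᵀ A V̄` invertible, and `Pₓᵀ = −P⊥ V⊥ᵀ A V̄ (V̄ᵀ A V̄)⁻¹`,
`S̄ = P̄ V̄ᵀ + Pₓ V⊥ᵀ`, `S⊥ = P⊥ V⊥ᵀ + Pₓᵀ V̄ᵀ`, the cross term
`U = V̄ᵀ Aᵀ S⊥ᵀ + S̄ A V⊥` vanishes. -/
theorem stmt11 {n p m : ℕ} (hp : p = n - m)
    (A : Matrix (Fin n) (Fin n) ℝ)
    (Vbar : Matrix (Fin n) (Fin p) ℝ) (Vperp : Matrix (Fin n) (Fin m) ℝ)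
    (horth1 : Vbarᵀ * Vperp = 0)
    (horth2 : Vbarᵀ * Vbar = 1)
    (horth3 : Vperpᵀ * Vperp = 1)
    (hker : A * Vperp = 0)
    (hinv : IsUnit (Vbarᵀ * A * Vbar))
    (Pbar : Matrix (Fin p) (Fin p) ℝ) (Pperp : Matrix (Fin m) (Fin m) ℝ)
    (Px : Matrix (Fin p) (Fin m) ℝ)
    (hPx : Pxᵀ = -(Pperp * Vperpᵀ * A * Vbar * (Vbarᵀ * A * Vbar)⁻¹))
    (Sbar : Matrix (Fin p) (Fin n) ℝ) (hSbar : Sbar = Pbar * Vbarᵀ + Px * Vperpᵀ)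
    (Sperp : Matrix (Fin m) (Fin n) ℝ)
    (hSperp : Sperp = Pperp * Vperpᵀ + Pxᵀ * Vbarᵀ) :
    Vbarᵀ * Aᵀ * Sperpᵀ + Sbar * A * Vperp = 0 :=
  stmt11_general A Vbar Vperp hker hinv Pperp Px hPx Sbar Sperp hSperp
end
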